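/- If ν(B̄(x, r)) ≤ β for every x ∈ ℝ^D and μ(B̄(y, r)) ≤ β for every y ∈ ℝ^D, where B̄(x, r) is the closed Euclidean ball of radius r centered at x, then for every t > 0 the cross-edge count satisfies P( Z ≥ 2( β n₁ n₂ + t·√(β n₁ n₂) + t·β·√(n₁ n₂ (n₁+n₂)) ) ) ≤ 1/t². -/

import Mathlib

/-!
Write `Z` as the sum of the edge indicators `1{(X i, Y j) ∈ S}` for `S = {dist ≤ r}`.
Integrating out a shared endpoint, an edge has probability at most `β` and two distinct edges
sharing an endpoint have joint probability at most `β²`, while edges with disjoint endpoints are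
independent and so uncorrelated. Hence `E Z ≤ β n₁ n₂` and
`Var Z ≤ β n₁ n₂ + β² n₁ n₂ (n₁ + n₂) ≤ (√(β n₁ n₂) + β √(n₁ n₂ (n₁ + n₂)))²`, and Chebyshev's
inequality at `t` times this standard deviation gives the bound. Finally `β > 0`, because a
probability measure on a separable space cannot vanish on every closed `r`-ball.
-/

open MeasureTheory ProbabilityTheory
open scoped ENNReal

lemma MeasureTheory.pos_of_forall_measure_closedBall_le {X : Type*} [PseudoMetricSpace X]
    [SecondCountableTopology X] [MeasurableSpace X] {μ : Measure X} [NeZero μ] {r c : ℝ}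
    (hr : 0 < r) (hμ : ∀ x, μ (Metric.closedBall x r) ≤ ENNReal.ofReal c) : 0 < c := by
  by_contra! hc
  refine NeZero.ne μ (Measure.measure_univ_eq_zero.1 <| measure_null_of_locally_null _
    fun x _ => ⟨Metric.closedBall x r, ?_, ?_⟩)
  · exact mem_nhdsWithin_of_mem_nhds (Metric.closedBall_mem_nhds x hr)
  · simpa [ENNReal.ofReal_eq_zero.2 hc] using hμ x

namespace ProbabilityTheory

variable {Ω α β : Type*} [MeasurableSpace Ω] [MeasurableSpace α] [MeasurableSpace β]
  {P : Measure Ω} [IsProbabilityMeasure P]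

lemma IndepFun.measure_mem_le {f : Ω → α} {g : Ω → β} (hf : Measurable f)
    (hg : Measurable g) (hfg : IndepFun f g P) {S : Set (α × β)} (hS : MeasurableSet S)
    {c : ℝ≥0∞} (hc : ∀ x, P.map g {y | (x, y) ∈ S} ≤ c) :
    P {ω | (f ω, g ω) ∈ S} ≤ c := by
  have : IsProbabilityMeasure (P.map f) := Measure.isProbabilityMeasure_map hf.aemeasurable
  calc P {ω | (f ω, g ω) ∈ S} = P.map (fun ω => (f ω, g ω)) S :=
        (Measure.map_apply (hf.prodMk hg) hS).symm
    _ = ∫⁻ x, P.map g {y | (x, y) ∈ S} ∂(P.map f) := by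
        rw [(indepFun_iff_map_prod_eq_prod_map_map hf.aemeasurable hg.aemeasurable).1 hfg,
          Measure.prod_apply hS]
        rfl
    _ ≤ ∫⁻ _, c ∂(P.map f) := lintegral_mono hc
    _ = c := by simp

lemma IndepFun.measure_mem_and_mem_le {f : Ω → α} {g h : Ω → β} (hf : Measurable f)
    (hg : Measurable g) (hh : Measurable h) (hfgh : IndepFun f (fun ω => (g ω, h ω)) P)
    (hgh : IndepFun g h P) {S : Set (α × β)} (hS : MeasurableSet S) {c c' : ℝ≥0∞}
    (hcg : ∀ x, P.map g {y | (x, y) ∈ S} ≤ c) (hch : ∀ x, P.map h {y | (x, y) ∈ S} ≤ c') :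
    P {ω | (f ω, g ω) ∈ S ∧ (f ω, h ω) ∈ S} ≤ c * c' := by
  have hT : MeasurableSet {p : α × β × β | (p.1, p.2.1) ∈ S ∧ (p.1, p.2.2) ∈ S} :=
    (measurable_fst.prodMk (measurable_fst.comp measurable_snd) hS).inter
      (measurable_fst.prodMk (measurable_snd.comp measurable_snd) hS)
  refine hfgh.measure_mem_le hf (hg.prodMk hh) hT fun x => ?_
  rw [(indepFun_iff_map_prod_eq_prod_map_map hg.aemeasurable hh.aemeasurable).1 hgh]
  exact (Measure.prod_prod {y | (x, y) ∈ S} {y | (x, y) ∈ S}).trans_le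
    (mul_le_mul' (hcg x) (hch x))

lemma covariance_indicator_one_le {A B : Set Ω} (hA : MeasurableSet A) (hB : MeasurableSet B) :
    cov[A.indicator 1, B.indicator 1; P] ≤ P.real (A ∩ B) := by
  have hL2 {s : Set Ω} (hs : MeasurableSet s) : MemLp (s.indicator (1 : Ω → ℝ)) 2 P :=
    memLp_indicator_const 2 hs 1 (Or.inr (measure_ne_top _ _))
  rw [covariance_eq_sub (hL2 hA) (hL2 hB), ← Set.inter_indicator_one,
    integral_indicator_one (hA.inter hB), integral_indicator_one hA, integral_indicator_one hB]
  exact sub_le_self _ (mul_nonneg measureReal_nonneg measureReal_nonneg)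

lemma measure_ge_le_one_div_sq_of_variance_le {Z : Ω → ℝ} (hZ : MemLp Z 2 P) {a s t : ℝ}
    (ht : 0 < t) (hs : 0 < s) (hvar : variance Z P ≤ s ^ 2) (ha : P[Z] + t * s ≤ a) :
    P {ω | a ≤ Z ω} ≤ ENNReal.ofReal (1 / t ^ 2) :=
  calc P {ω | a ≤ Z ω} ≤ P {ω | t * s ≤ |Z ω - P[Z]|} :=
        measure_mono fun ω (hω : a ≤ Z ω) => by
          change t * s ≤ |Z ω - P[Z]|
          linarith [le_abs_self (Z ω - P[Z])]
    _ ≤ ENNReal.ofReal (variance Z P / (t * s) ^ 2) :=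
        meas_ge_le_variance_div_sq hZ (by positivity)
    _ ≤ ENNReal.ofReal (1 / t ^ 2) := by
        refine ENNReal.ofReal_le_ofReal ?_
        rw [div_le_div_iff₀ (by positivity) (by positivity)]
        nlinarith [sq_nonneg t]

end ProbabilityTheory

def crossEdge {Ω α ι κ : Type*} (S : Set (α × α)) (X : ι → Ω → α) (Y : κ → Ω → α)
    (q : ι × κ) : Set Ω :=
  {ω | (X q.1 ω, Y q.2 ω) ∈ S}

noncomputable def crossEdgeCount {Ω α ι κ : Type*} [Fintype ι] [Fintype κ] (S : Set (α × α))
    (X : ι → Ω → α) (Y : κ → Ω → α) : Ω → ℝ :=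
  ∑ q : ι × κ, (crossEdge S X Y q).indicator 1

section CrossEdgeCount

variable {Ω α ι κ : Type*} [MeasurableSpace Ω] [MeasurableSpace α]
  {P : Measure Ω} [IsProbabilityMeasure P] {S : Set (α × α)} {X : ι → Ω → α} {Y : κ → Ω → α}

lemma measurableSet_crossEdge (hS : MeasurableSet S) (hX : ∀ i, Measurable (X i))
    (hY : ∀ j, Measurable (Y j)) (q : ι × κ) : MeasurableSet (crossEdge S X Y q) :=
  hS.preimage ((hX q.1).prodMk (hY q.2))

lemma memLp_indicator_crossEdge (hS : MeasurableSet S) (hX : ∀ i, Measurable (X i))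
    (hY : ∀ j, Measurable (Y j)) (q : ι × κ) :
    MemLp ((crossEdge S X Y q).indicator (1 : Ω → ℝ)) 2 P :=
  memLp_indicator_const 2 (measurableSet_crossEdge hS hX hY q) 1 (Or.inr (measure_ne_top _ _))

lemma memLp_crossEdgeCount [Fintype ι] [Fintype κ] (hS : MeasurableSet S)
    (hX : ∀ i, Measurable (X i)) (hY : ∀ j, Measurable (Y j)) :
    MemLp (crossEdgeCount S X Y) 2 P :=
  memLp_finsetSum' _ fun q _ => memLp_indicator_crossEdge hS hX hY q

lemma measure_crossEdge_le (hS : MeasurableSet S) (hX : ∀ i, Measurable (X i))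
    (hY : ∀ j, Measurable (Y j)) (hindep : iIndepFun (Sum.elim X Y) P) {c : ℝ≥0∞}
    (hYS : ∀ j x, P.map (Y j) {y | (x, y) ∈ S} ≤ c) (q : ι × κ) :
    P (crossEdge S X Y q) ≤ c :=
  IndepFun.measure_mem_le (hX q.1) (hY q.2) (hindep.indepFun Sum.inl_ne_inr) hS (hYS q.2)

lemma integral_crossEdgeCount_le [Fintype ι] [Fintype κ] (hS : MeasurableSet S)
    (hX : ∀ i, Measurable (X i)) (hY : ∀ j, Measurable (Y j))
    (hindep : iIndepFun (Sum.elim X Y) P) {c : ℝ} (hc : 0 ≤ c)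
    (hYS : ∀ j x, P.map (Y j) {y | (x, y) ∈ S} ≤ ENNReal.ofReal c) :
    P[crossEdgeCount S X Y] ≤ c * Fintype.card ι * Fintype.card κ := by
  simp_rw [crossEdgeCount, Finset.sum_apply]
  rw [integral_finsetSum _ fun q _ => (memLp_indicator_crossEdge hS hX hY q).integrable one_le_two]
  calc ∑ q, ∫ ω, (crossEdge S X Y q).indicator 1 ω ∂P ≤ ∑ _q : ι × κ, c :=
        Finset.sum_le_sum fun q _ => by
          rw [integral_indicator_one (measurableSet_crossEdge hS hX hY q)]
          exact ENNReal.toReal_le_of_le_ofReal hc (measure_crossEdge_le hS hX hY hindep hYS q)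
    _ = c * Fintype.card ι * Fintype.card κ := by
        rw [Finset.sum_const, Finset.card_univ, Fintype.card_prod, nsmul_eq_mul, Nat.cast_mul]
        ring

lemma covariance_crossEdge_le [DecidableEq ι] [DecidableEq κ] (hS : MeasurableSet S)
    (hX : ∀ i, Measurable (X i)) (hY : ∀ j, Measurable (Y j))
    (hindep : iIndepFun (Sum.elim X Y) P) {c : ℝ} (hc : 0 ≤ c)
    (hXS : ∀ i y, P.map (X i) {x | (x, y) ∈ S} ≤ ENNReal.ofReal c)
    (hYS : ∀ j x, P.map (Y j) {y | (x, y) ∈ S} ≤ ENNReal.ofReal c) (i k : ι) (j l : κ) :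
    cov[(crossEdge S X Y (i, j)).indicator 1, (crossEdge S X Y (k, l)).indicator 1; P] ≤
      (if i = k ∧ j = l then c else 0) + (if i = k then c ^ 2 else 0) +
        (if j = l then c ^ 2 else 0) := by
  have hW : ∀ k, Measurable (Sum.elim X Y k) := Sum.rec hX hY
  have hcov_le {c' : ℝ} (hc' : 0 ≤ c')
      (h : P (crossEdge S X Y (i, j) ∩ crossEdge S X Y (k, l)) ≤ ENNReal.ofReal c') :
      cov[(crossEdge S X Y (i, j)).indicator 1, (crossEdge S X Y (k, l)).indicator 1; P] ≤ c' :=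
    (covariance_indicator_one_le (measurableSet_crossEdge hS hX hY _)
      (measurableSet_crossEdge hS hX hY _)).trans (ENNReal.toReal_le_of_le_ofReal hc' h)
  rcases eq_or_ne i k with rfl | hik <;> rcases eq_or_ne j l with rfl | hjl
  · refine (hcov_le hc ?_).trans (by simp only [and_self, if_true]; linarith [sq_nonneg c])
    rw [Set.inter_self]
    exact measure_crossEdge_le hS hX hY hindep hYS _
  · refine (hcov_le (sq_nonneg c) ?_).trans (by simp [hjl])
    rw [ENNReal.ofReal_pow hc, sq]
    exact IndepFun.measure_mem_and_mem_le (hX i) (hY j) (hY l)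
      (hindep.indepFun_prodMk hW (.inr j) (.inr l) (.inl i) Sum.inr_ne_inl Sum.inr_ne_inl).symm
      (hindep.indepFun (Sum.inr_injective.ne hjl)) hS (hYS j) (hYS l)
  · refine (hcov_le (sq_nonneg c) ?_).trans (by simp [hik])
    rw [ENNReal.ofReal_pow hc, sq]
    -- the shared endpoint is `Y j`: read the edge relation backwards
    exact IndepFun.measure_mem_and_mem_le (S := Prod.swap ⁻¹' S) (hY j) (hX i) (hX k)
      (hindep.indepFun_prodMk hW (.inl i) (.inl k) (.inr j) Sum.inl_ne_inr Sum.inl_ne_inr).symm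
      (hindep.indepFun (Sum.inl_injective.ne hik)) (hS.preimage measurable_swap) (hXS i) (hXS k)
  · have hpairs := hindep.indepFun_prodMk_prodMk hW (.inl i) (.inr j) (.inl k) (.inr l)
      (Sum.inl_injective.ne hik) Sum.inl_ne_inr Sum.inr_ne_inl (Sum.inr_injective.ne hjl)
    have hind : IndepFun ((crossEdge S X Y (i, j)).indicator (1 : Ω → ℝ))
        ((crossEdge S X Y (k, l)).indicator 1) P :=
      hpairs.comp (measurable_one.indicator hS (f := (1 : α × α → ℝ)))
        (measurable_one.indicator hS (f := (1 : α × α → ℝ)))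
    rw [hind.covariance_eq_zero (memLp_indicator_crossEdge hS hX hY _)
      (memLp_indicator_crossEdge hS hX hY _)]
    simp [hik, hjl]

lemma variance_crossEdgeCount_le [Fintype ι] [Fintype κ] (hS : MeasurableSet S)
    (hX : ∀ i, Measurable (X i)) (hY : ∀ j, Measurable (Y j))
    (hindep : iIndepFun (Sum.elim X Y) P) {c : ℝ} (hc : 0 ≤ c)
    (hXS : ∀ i y, P.map (X i) {x | (x, y) ∈ S} ≤ ENNReal.ofReal c)
    (hYS : ∀ j x, P.map (Y j) {y | (x, y) ∈ S} ≤ ENNReal.ofReal c) :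
    variance (crossEdgeCount S X Y) P ≤ c * Fintype.card ι * Fintype.card κ +
      c ^ 2 * (Fintype.card ι * Fintype.card κ * (Fintype.card ι + Fintype.card κ)) := by
  classical
  have hL2 := memLp_indicator_crossEdge (P := P) hS hX hY
  rw [← covariance_self (memLp_crossEdgeCount hS hX hY).aemeasurable, crossEdgeCount,
    covariance_sum_sum hL2 hL2]
  simp only [Fintype.sum_prod_type]
  calc _ ≤ ∑ i : ι, ∑ j : κ, ∑ k : ι, ∑ l : κ, ((if i = k ∧ j = l then c else 0) +
        (if i = k then c ^ 2 else 0) + (if j = l then c ^ 2 else 0)) := by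
        gcongr with i _ j _ k _ l _
        exact covariance_crossEdge_le hS hX hY hindep hc hXS hYS i k j l
    _ = _ := by
        simp only [ite_and, Finset.sum_add_distrib, Finset.sum_ite_irrel, Finset.sum_ite_eq,
          Finset.mem_univ, if_true, Finset.sum_const_zero, Finset.sum_const, Finset.card_univ,
          nsmul_eq_mul]
        ring

end CrossEdgeCount

theorem cross_edge_chebyshev_bound_general
    {Ω' : Type*} [MeasurableSpace Ω'] (P : Measure Ω') [IsProbabilityMeasure P]
    (n₁ n₂ D : ℕ) (hn₁ : 1 ≤ n₁) (hn₂ : 1 ≤ n₂)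
    (r β : ℝ) (hr : 0 < r)
    (μ ν : Measure (EuclideanSpace ℝ (Fin D)))
    (X : Fin n₁ → Ω' → EuclideanSpace ℝ (Fin D))
    (Y : Fin n₂ → Ω' → EuclideanSpace ℝ (Fin D))
    (hXmeas : ∀ i, Measurable (X i)) (hYmeas : ∀ j, Measurable (Y j))
    (hindep : iIndepFun (β := fun _ : Fin n₁ ⊕ Fin n₂ => EuclideanSpace ℝ (Fin D))
      (Sum.elim X Y) P)
    (hX : ∀ i, Measure.map (X i) P = μ)
    (hY : ∀ j, Measure.map (Y j) P = ν)
    (Z : Ω' → ℝ)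
    (hZ : ∀ ω, Z ω = ∑ i, ∑ j, if ‖X i ω - Y j ω‖ ≤ r then (1:ℝ) else 0)
    (hν : ∀ x : EuclideanSpace ℝ (Fin D),
      ν (Metric.closedBall x r) ≤ ENNReal.ofReal β)
    (hμ : ∀ y : EuclideanSpace ℝ (Fin D),
      μ (Metric.closedBall y r) ≤ ENNReal.ofReal β)
    (t : ℝ) (ht : 0 < t) :
    P {ω | Z ω ≥ 2 * (β * n₁ * n₂ + t * Real.sqrt (β * n₁ * n₂)
        + t * β * Real.sqrt (n₁ * n₂ * (n₁ + n₂)))}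
      ≤ ENNReal.ofReal (1 / t^2) := by
  let S : Set (EuclideanSpace ℝ (Fin D) × EuclideanSpace ℝ (Fin D)) := {q | dist q.1 q.2 ≤ r}
  have hS : MeasurableSet S := (isClosed_le continuous_dist continuous_const).measurableSet
  have hZS : Z = crossEdgeCount S X Y := funext fun ω => by
    rw [hZ, crossEdgeCount, Finset.sum_apply, Fintype.sum_prod_type]
    simp [crossEdge, S, Set.indicator_apply, dist_eq_norm]
  have hXS : ∀ i y, P.map (X i) {x | (x, y) ∈ S} ≤ ENNReal.ofReal β := fun i y => by
    simpa [hX, S, Metric.closedBall] using hμ y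
  have hYS : ∀ j x, P.map (Y j) {y | (x, y) ∈ S} ≤ ENNReal.ofReal β := fun j x => by
    simpa [hY, S, Metric.closedBall, dist_comm] using hν x
  have : IsProbabilityMeasure ν :=
    hY ⟨0, hn₂⟩ ▸ Measure.isProbabilityMeasure_map (hYmeas _).aemeasurable
  have hβ : 0 < β := pos_of_forall_measure_closedBall_le hr hν
  have hmean := integral_crossEdgeCount_le hS hXmeas hYmeas hindep hβ.le hYS
  have hvar := variance_crossEdgeCount_le hS hXmeas hYmeas hindep hβ.le hXS hYS
  simp only [Fintype.card_fin] at hmean hvar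
  have hB : 0 < β * n₁ * n₂ := mul_pos (mul_pos hβ (Nat.cast_pos.2 hn₁)) (Nat.cast_pos.2 hn₂)
  have hN : 0 ≤ (n₁ * n₂ * (n₁ + n₂) : ℝ) := by positivity
  have hsqrtB := Real.sqrt_nonneg (β * n₁ * n₂)
  have hsqrtN := Real.sqrt_nonneg (n₁ * n₂ * (n₁ + n₂) : ℝ)
  rw [hZS]
  refine measure_ge_le_one_div_sq_of_variance_le (memLp_crossEdgeCount hS hXmeas hYmeas) ht
    (s := Real.sqrt (β * n₁ * n₂) + β * Real.sqrt (n₁ * n₂ * (n₁ + n₂)))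
    (add_pos_of_pos_of_nonneg (Real.sqrt_pos.2 hB) (mul_nonneg hβ.le hsqrtN)) ?_ ?_
  · nlinarith [Real.sq_sqrt hB.le, Real.sq_sqrt hN, mul_nonneg (mul_nonneg hβ.le hsqrtB) hsqrtN]
  · nlinarith [mul_nonneg ht.le hsqrtB, mul_nonneg (mul_nonneg ht.le hβ.le) hsqrtN]

theorem cross_edge_chebyshev_bound
    {Ω' : Type*} [MeasurableSpace Ω'] (P : Measure Ω') [IsProbabilityMeasure P]
    (n₁ n₂ D : ℕ) (hn₁ : 1 ≤ n₁) (hn₂ : 1 ≤ n₂) (hD : 1 ≤ D)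
    (r β : ℝ) (hr : 0 < r) (hβ : 0 ≤ β)
    (μ ν : Measure (EuclideanSpace ℝ (Fin D)))
    (X : Fin n₁ → Ω' → EuclideanSpace ℝ (Fin D))
    (Y : Fin n₂ → Ω' → EuclideanSpace ℝ (Fin D))
    (hXmeas : ∀ i, Measurable (X i)) (hYmeas : ∀ j, Measurable (Y j))
    (hindep : iIndepFun (β := fun _ : Fin n₁ ⊕ Fin n₂ => EuclideanSpace ℝ (Fin D))
      (Sum.elim X Y) P)
    (hX : ∀ i, Measure.map (X i) P = μ)
    (hY : ∀ j, Measure.map (Y j) P = ν)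
    (Z : Ω' → ℝ)
    (hZ : ∀ ω, Z ω = ∑ i, ∑ j, if ‖X i ω - Y j ω‖ ≤ r then (1:ℝ) else 0)
    (hν : ∀ x : EuclideanSpace ℝ (Fin D),
      ν (Metric.closedBall x r) ≤ ENNReal.ofReal β)
    (hμ : ∀ y : EuclideanSpace ℝ (Fin D),
      μ (Metric.closedBall y r) ≤ ENNReal.ofReal β)
    (t : ℝ) (ht : 0 < t) :
    P {ω | Z ω ≥ 2 * (β * n₁ * n₂ + t * Real.sqrt (β * n₁ * n₂)
        + t * β * Real.sqrt (n₁ * n₂ * (n₁ + n₂)))}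
      ≤ ENNReal.ofReal (1 / t^2) :=
  cross_edge_chebyshev_bound_general P n₁ n₂ D hn₁ hn₂ r β hr μ ν X Y hXmeas hYmeas hindep hX hY Z
    hZ hν hμ t ht
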